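/- Let H ∈ (0,1) and let α satisfy 0 < α < min{1/2, H}. Then there exists a constant κ > 0 depending only on α and H such that for all real numbers t₁, t₂ with t₂ > 2t₁ > 0 and every square-integrable function g₁ : [0, t₁] → ℝⁿ, the function g₂ : [0,∞) → [0,∞) defined by g₂(t) = ∫₀^{t₁} t^{1/2−H} (t₂ − s)^{H−1/2} / (t + t₂ − s) · ‖g₁(s)‖ ds satisfies ‖g₂‖_α ≤ κ (t₂/t₁)^{α − 1/2} ‖g₁‖_α, where g₁ is regarded as a function on [0,∞) extended by zero. -/

import Mathlib

open MeasureTheory Set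
open scoped ENNReal

/-- The squared weighted norm `‖g‖_α² = ∫₀^∞ (1+t)^{2α} ‖g(t)‖² dt`, as an extended
nonnegative real. -/
noncomputable def alphaNormSq {E : Type*} [NormedAddCommGroup E] (α : ℝ) (g : ℝ → E) :
    ℝ≥0∞ :=
  ∫⁻ t in Set.Ioi (0 : ℝ), ENNReal.ofReal ((1 + t) ^ (2 * α) * ‖g t‖ ^ 2)

/-! For `s ∈ [0, t₁]` we have `t₂/2 ≤ t₂ - s ≤ t₂`, so the kernel is at most
`4 t₂^{H-1/2} · t^{1/2-H}/(t+t₂)`, and `g₂` is dominated by this profile times `∫₀^{t₁} ‖g₁‖`.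
Splitting at `t = t₂`, the weighted norm of the profile is `≲ ((1+t₂)/t₂)^{2α} t₂^{2α-2H}`
(integrable at `0` because `H < 1`, at `∞` because `α < H`), while Cauchy–Schwarz against the
weight `(1+s)^{-2α}` gives `(∫₀^{t₁} ‖g₁‖)² ≲ ((1+t₁)/t₁)^{-2α} t₁^{1-2α} ‖g₁‖_α²` (because
`α < 1/2`). Since `x ↦ (1+x)/x` is decreasing, the two factors `((1+x)/x)^{±2α}` combine to at
most `1`, leaving `(t₂/t₁)^{2α-1}`. -/

theorem Real.rpow_le_two_mul_rpow {x y γ : ℝ} (hy : 0 < y) (hyx : y / 2 ≤ x) (hxy : x ≤ y)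
    (hγ : -1 ≤ γ) : x ^ γ ≤ 2 * y ^ γ := by
  have hx : 0 < x := by linarith
  rcases le_total 0 γ with hγ0 | hγ0
  · have := Real.rpow_nonneg hy.le γ
    linarith [Real.rpow_le_rpow hx.le hxy hγ0]
  · calc x ^ γ ≤ (y / 2) ^ γ := Real.rpow_le_rpow_of_nonpos (by positivity) hyx hγ0
      _ = (2 : ℝ) ^ (-γ) * y ^ γ := by
        rw [Real.div_rpow hy.le zero_le_two, Real.rpow_neg zero_le_two]; ring
      _ ≤ 2 * y ^ γ := by
        gcongr
        simpa using Real.rpow_le_rpow_of_exponent_le one_le_two (show -γ ≤ 1 by linarith)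

theorem kernel_le_of_two_mul_lt {H t t₂ s : ℝ} (hH : -1 / 2 ≤ H) (ht : 0 < t) (hs : 0 ≤ s)
    (hs₂ : 2 * s < t₂) :
    t ^ ((1 : ℝ) / 2 - H) * (t₂ - s) ^ (H - 1 / 2) / (t + t₂ - s) ≤
      t ^ ((1 : ℝ) / 2 - H) / (t + t₂) * (4 * t₂ ^ (H - 1 / 2)) := by
  have hpow : (t₂ - s) ^ (H - 1 / 2) ≤ 2 * t₂ ^ (H - 1 / 2) :=
    Real.rpow_le_two_mul_rpow (by linarith) (by linarith) (by linarith) (by linarith)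
  have hden : 1 / (t + t₂ - s) ≤ 2 / (t + t₂) := by
    rw [div_le_div_iff₀ (by linarith) (by linarith)]; linarith
  have ht' := Real.rpow_nonneg ht.le ((1 : ℝ) / 2 - H)
  calc t ^ ((1 : ℝ) / 2 - H) * (t₂ - s) ^ (H - 1 / 2) / (t + t₂ - s)
      = t ^ ((1 : ℝ) / 2 - H) * (t₂ - s) ^ (H - 1 / 2) * (1 / (t + t₂ - s)) := by ring
    _ ≤ t ^ ((1 : ℝ) / 2 - H) * (2 * t₂ ^ (H - 1 / 2)) * (2 / (t + t₂)) := by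
      have : 0 < t + t₂ - s := by linarith
      have : 0 < t₂ := by linarith
      gcongr
    _ = _ := by ring

theorem enorm_intervalIntegral_kernel_le {H t t₁ t₂ : ℝ} (hH : -1 / 2 ≤ H) (ht : 0 < t)
    (ht₁ : 0 ≤ t₁) (ht₁₂ : 2 * t₁ < t₂) (f : ℝ → ℝ) :
    ‖∫ s in (0 : ℝ)..t₁,
        (t ^ ((1 : ℝ) / 2 - H) * (t₂ - s) ^ (H - 1 / 2) / (t + t₂ - s)) * f s‖ₑ ≤
      ‖t ^ ((1 : ℝ) / 2 - H) / (t + t₂)‖ₑ *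
        (ENNReal.ofReal (4 * t₂ ^ (H - 1 / 2)) * ∫⁻ s in Ioc 0 t₁, ‖f s‖ₑ) := by
  rw [intervalIntegral.integral_of_le ht₁, ← mul_assoc,
    ← lintegral_const_mul' _ _ (ENNReal.mul_ne_top enorm_ne_top ENNReal.ofReal_ne_top)]
  refine (enorm_integral_le_lintegral_enorm _).trans (setLIntegral_mono' measurableSet_Ioc ?_)
  intro s ⟨hs, hst₁⟩
  have ht₂s : 0 < t₂ - s := by linarith
  have ht₂ : 0 < t₂ := by linarith
  have hden : 0 < t + t₂ - s := by linarith
  rw [enorm_mul, Real.enorm_of_nonneg (by positivity : 0 ≤ t ^ ((1 : ℝ) / 2 - H) / (t + t₂)),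
    Real.enorm_of_nonneg (by positivity :
      0 ≤ t ^ ((1 : ℝ) / 2 - H) * (t₂ - s) ^ (H - 1 / 2) / (t + t₂ - s)),
    ← ENNReal.ofReal_mul (by positivity)]
  gcongr
  exact kernel_le_of_two_mul_lt hH ht hs.le (by linarith)

theorem alphaNormSq_eq_lintegral_enorm {E : Type*} [NormedAddCommGroup E] (α : ℝ)
    (g : ℝ → E) :
    alphaNormSq α g = ∫⁻ t in Ioi 0, ENNReal.ofReal ((1 + t) ^ (2 * α)) * ‖g t‖ₑ ^ 2 := by
  refine setLIntegral_congr_fun measurableSet_Ioi fun t ht => ?_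
  have : (0 : ℝ) ≤ 1 + t := by linarith [mem_Ioi.1 ht]
  rw [ENNReal.ofReal_mul (by positivity), ENNReal.ofReal_pow (norm_nonneg _), ofReal_norm]

theorem alphaNormSq_le_alphaNormSq_mul_sq {E F : Type*} [NormedAddCommGroup E]
    [NormedAddCommGroup F] (α : ℝ) {g : ℝ → E} {h : ℝ → F}
    (hh : AEStronglyMeasurable h (volume.restrict (Ioi 0))) {B : ℝ≥0∞}
    (hgh : ∀ t > 0, ‖g t‖ₑ ≤ ‖h t‖ₑ * B) :
    alphaNormSq α g ≤ alphaNormSq α h * B ^ 2 := by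
  simp_rw [alphaNormSq_eq_lintegral_enorm]
  rw [← lintegral_mul_const'' _ (by fun_prop)]
  refine setLIntegral_mono' measurableSet_Ioi fun t ht => ?_
  rw [mul_assoc, ← mul_pow]
  gcongr
  exact hgh t ht

theorem lintegral_Ioc_rpow {a r : ℝ} (ha : 0 ≤ a) (hr : -1 < r) :
    ∫⁻ t in Ioc 0 a, ENNReal.ofReal (t ^ r) = ENNReal.ofReal (a ^ (r + 1) / (r + 1)) := by
  rw [← ofReal_integral_eq_lintegral_ofReal
      (intervalIntegral.intervalIntegrable_rpow' hr).1
      ((ae_restrict_iff' measurableSet_Ioc).2 (ae_of_all _ fun t ht => by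
        have := ht.1.le; positivity)),
    ← intervalIntegral.integral_of_le ha, integral_rpow (Or.inl hr),
    Real.zero_rpow (by linarith), sub_zero]

theorem lintegral_Ioi_rpow {a r : ℝ} (ha : 0 < a) (hr : r < -1) :
    ∫⁻ t in Ioi a, ENNReal.ofReal (t ^ r) = ENNReal.ofReal (-a ^ (r + 1) / (r + 1)) := by
  rw [← ofReal_integral_eq_lintegral_ofReal (integrableOn_Ioi_rpow_of_lt hr ha)
      ((ae_restrict_iff' measurableSet_Ioi).2 (ae_of_all _ fun t ht => by
        have := ha.trans ht; positivity)),
    integral_Ioi_rpow_of_lt hr ha]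

theorem one_add_rpow_mul_norm_sq_le {α H t T : ℝ} (hα : 0 ≤ α) (ht : 0 < t) (hT : 0 < T) :
    (1 + t) ^ (2 * α) * ‖t ^ ((1 : ℝ) / 2 - H) / (t + T)‖ ^ 2 ≤
      ((1 + T) / T) ^ (2 * α) * (t + T) ^ (2 * α - 2) * t ^ (1 - 2 * H) := by
  have htT : 0 < t + T := by positivity
  have hone : 1 + t ≤ (1 + T) / T * (t + T) := by
    rw [div_mul_eq_mul_div, le_div_iff₀ hT]; nlinarith
  have hsq : ‖t ^ ((1 : ℝ) / 2 - H) / (t + T)‖ ^ 2 = t ^ (1 - 2 * H) / (t + T) ^ 2 := by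
    rw [Real.norm_eq_abs, sq_abs, div_pow, ← Real.rpow_mul_natCast ht.le]; ring_nf
  have hsub : (t + T) ^ (2 * α - 2) = (t + T) ^ (2 * α) / (t + T) ^ 2 := by
    rw [Real.rpow_sub htT, Real.rpow_two]
  calc (1 + t) ^ (2 * α) * ‖t ^ ((1 : ℝ) / 2 - H) / (t + T)‖ ^ 2
      ≤ ((1 + T) / T * (t + T)) ^ (2 * α) * (t ^ (1 - 2 * H) / (t + T) ^ 2) := by
        rw [hsq]; gcongr
    _ = _ := by
        rw [Real.mul_rpow (by positivity) htT.le, hsub]; ring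

theorem lintegral_Ioc_one_add_rpow_mul_norm_sq_le {α H T : ℝ} (hα : 0 ≤ α) (hα1 : α ≤ 1)
    (hH : H < 1) (hT : 0 < T) :
    ∫⁻ t in Ioc 0 T,
        ENNReal.ofReal ((1 + t) ^ (2 * α) * ‖t ^ ((1 : ℝ) / 2 - H) / (t + T)‖ ^ 2) ≤
      ENNReal.ofReal (((1 + T) / T) ^ (2 * α) * T ^ (2 * α - 2) *
        (T ^ (2 - 2 * H) / (2 - 2 * H))) := by
  rw [ENNReal.ofReal_mul (by positivity), show 2 - 2 * H = 1 - 2 * H + 1 by ring,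
    ← lintegral_Ioc_rpow hT.le (by linarith), ← lintegral_const_mul' _ _ ENNReal.ofReal_ne_top]
  refine setLIntegral_mono' measurableSet_Ioc fun t ⟨ht, htT⟩ => ?_
  rw [← ENNReal.ofReal_mul (by positivity)]
  have hle : (t + T) ^ (2 * α - 2) ≤ T ^ (2 * α - 2) :=
    Real.rpow_le_rpow_of_nonpos hT (by linarith) (by linarith)
  refine ENNReal.ofReal_le_ofReal ((one_add_rpow_mul_norm_sq_le hα ht hT).trans ?_)
  gcongr

theorem lintegral_Ioi_one_add_rpow_mul_norm_sq_le {α H T : ℝ} (hα : 0 ≤ α) (hα1 : α ≤ 1)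
    (hαH : α < H) (hT : 0 < T) :
    ∫⁻ t in Ioi T,
        ENNReal.ofReal ((1 + t) ^ (2 * α) * ‖t ^ ((1 : ℝ) / 2 - H) / (t + T)‖ ^ 2) ≤
      ENNReal.ofReal (((1 + T) / T) ^ (2 * α) * (T ^ (2 * α - 2 * H) / (2 * H - 2 * α))) := by
  rw [ENNReal.ofReal_mul (by positivity),
    show 2 * α - 2 * H = (2 * α - 2 + (1 - 2 * H)) + 1 by ring,
    show 2 * H - 2 * α = -(2 * α - 2 + (1 - 2 * H) + 1) by ring, div_neg, ← neg_div,
    ← lintegral_Ioi_rpow hT (by linarith), ← lintegral_const_mul' _ _ ENNReal.ofReal_ne_top]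
  refine setLIntegral_mono' measurableSet_Ioi fun t (ht : T < t) => ?_
  have ht0 : 0 < t := hT.trans ht
  rw [← ENNReal.ofReal_mul (by positivity), Real.rpow_add ht0, ← mul_assoc]
  have hle : (t + T) ^ (2 * α - 2) ≤ t ^ (2 * α - 2) :=
    Real.rpow_le_rpow_of_nonpos ht0 (by linarith) (by linarith)
  refine ENNReal.ofReal_le_ofReal ((one_add_rpow_mul_norm_sq_le hα ht0 hT).trans ?_)
  gcongr

theorem alphaNormSq_rpow_div_add_le {α H T : ℝ} (hα : 0 ≤ α) (hαH : α < H) (hH : H < 1)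
    (hT : 0 < T) :
    alphaNormSq α (fun t : ℝ => t ^ ((1 : ℝ) / 2 - H) / (t + T)) ≤
      ENNReal.ofReal (((1 + T) / T) ^ (2 * α) * T ^ (2 * α - 2 * H) *
        (1 / (2 - 2 * H) + 1 / (2 * H - 2 * α))) := by
  have hH1 : 0 < 2 - 2 * H := by linarith
  have hαH1 : 0 < 2 * H - 2 * α := by linarith
  rw [alphaNormSq, ← Ioc_union_Ioi_eq_Ioi hT.le,
    lintegral_union measurableSet_Ioi (Ioc_disjoint_Ioi le_rfl)]
  refine (add_le_add (lintegral_Ioc_one_add_rpow_mul_norm_sq_le hα (by linarith) hH hT)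
    (lintegral_Ioi_one_add_rpow_mul_norm_sq_le hα (by linarith) hαH hT)).trans_eq ?_
  rw [← ENNReal.ofReal_add (by positivity) (by positivity)]
  congr 1
  have hT' : T ^ (2 * α - 2) * T ^ (2 - 2 * H) = T ^ (2 * α - 2 * H) := by
    rw [← Real.rpow_add hT]; ring_nf
  rw [← hT']
  ring

theorem sq_lintegral_mul_le {X : Type*} [MeasurableSpace X] {μ : Measure X}
    {f g : X → ℝ≥0∞} (hf : AEMeasurable f μ) (hg : AEMeasurable g μ) :
    (∫⁻ x, f x * g x ∂μ) ^ 2 ≤ (∫⁻ x, f x ^ 2 ∂μ) * ∫⁻ x, g x ^ 2 ∂μ := by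
  have h := ENNReal.lintegral_mul_le_Lp_mul_Lq μ Real.HolderConjugate.two_two hf hg
  simp only [Pi.mul_apply, ENNReal.rpow_two] at h
  calc (∫⁻ x, f x * g x ∂μ) ^ 2
      ≤ ((∫⁻ x, f x ^ 2 ∂μ) ^ (1 / 2 : ℝ) * (∫⁻ x, g x ^ 2 ∂μ) ^ (1 / 2 : ℝ)) ^ 2 := by gcongr
    _ = _ := by
      rw [mul_pow, ← ENNReal.rpow_two, ← ENNReal.rpow_two, ← ENNReal.rpow_mul,
        ← ENNReal.rpow_mul]
      norm_num

theorem lintegral_Ioc_one_add_rpow_neg_le {a p : ℝ} (ha : 0 < a) (hp : 0 ≤ p) (hp1 : p < 1) :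
    ∫⁻ s in Ioc 0 a, ENNReal.ofReal ((1 + s) ^ (-p)) ≤
      ENNReal.ofReal (((1 + a) / a) ^ (-p) * (a ^ (1 - p) / (1 - p))) := by
  have hexp : 1 - p = -p + 1 := by ring
  rw [ENNReal.ofReal_mul (by positivity), hexp, ← lintegral_Ioc_rpow ha.le (by linarith),
    ← lintegral_const_mul' _ _ ENNReal.ofReal_ne_top]
  refine setLIntegral_mono' measurableSet_Ioc fun s ⟨hs, hsa⟩ => ?_
  rw [← ENNReal.ofReal_mul (by positivity)]
  refine ENNReal.ofReal_le_ofReal ?_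
  have hratio : (1 + a) / a ≤ (1 + s) / s := by
    rw [div_le_div_iff₀ ha hs]; nlinarith
  calc (1 + s) ^ (-p) = ((1 + s) / s) ^ (-p) * s ^ (-p) := by
        rw [← Real.mul_rpow (by positivity) hs.le, div_mul_cancel₀ _ hs.ne']
    _ ≤ ((1 + a) / a) ^ (-p) * s ^ (-p) := by
        have := Real.rpow_le_rpow_of_nonpos (by positivity) hratio (by linarith : -p ≤ 0)
        gcongr

theorem sq_lintegral_Ioc_enorm_le {E : Type*} [NormedAddCommGroup E] {α a : ℝ} (hα : 0 ≤ α)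
    (hα1 : α < 1 / 2) (ha : 0 < a) {g : ℝ → E}
    (hg : AEStronglyMeasurable g (volume.restrict (Ioc 0 a))) :
    (∫⁻ s in Ioc 0 a, ‖g s‖ₑ) ^ 2 ≤
      ENNReal.ofReal (((1 + a) / a) ^ (-(2 * α)) * (a ^ (1 - 2 * α) / (1 - 2 * α))) *
        alphaNormSq α g := by
  have hsplit : ∀ s ∈ Ioc (0 : ℝ) a, ‖g s‖ₑ =
      ENNReal.ofReal ((1 + s) ^ (-α)) * (ENNReal.ofReal ((1 + s) ^ α) * ‖g s‖ₑ) := by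
    intro s ⟨hs, _⟩
    rw [← mul_assoc, ← ENNReal.ofReal_mul (by positivity), ← Real.rpow_add (by positivity),
      neg_add_cancel, Real.rpow_zero, ENNReal.ofReal_one, one_mul]
  have hweight : ∀ s ∈ Ioc (0 : ℝ) a, ENNReal.ofReal ((1 + s) ^ (-α)) ^ 2 =
      ENNReal.ofReal ((1 + s) ^ (-(2 * α))) := by
    intro s ⟨hs, _⟩
    rw [← ENNReal.ofReal_pow (by positivity), ← Real.rpow_mul_natCast (by positivity)]
    ring_nf
  have hnorm :
      ∫⁻ s in Ioc 0 a, (ENNReal.ofReal ((1 + s) ^ α) * ‖g s‖ₑ) ^ 2 ≤ alphaNormSq α g := by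
    rw [alphaNormSq_eq_lintegral_enorm]
    refine (setLIntegral_congr_fun measurableSet_Ioc fun s ⟨hs, _⟩ => ?_).trans_le
      (lintegral_mono_set Ioc_subset_Ioi_self)
    rw [mul_pow, ← ENNReal.ofReal_pow (by positivity), ← Real.rpow_mul_natCast (by positivity)]
    ring_nf
  rw [setLIntegral_congr_fun measurableSet_Ioc hsplit]
  refine (sq_lintegral_mul_le (by fun_prop) (by fun_prop)).trans ?_
  rw [setLIntegral_congr_fun measurableSet_Ioc hweight]
  gcongr
  exact lintegral_Ioc_one_add_rpow_neg_le ha (by linarith) (by linarith)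

theorem ENNReal.rpow_half_le_of_le_sq_mul {X Y : ℝ≥0∞} {c : ℝ}
    (h : X ≤ ENNReal.ofReal c ^ 2 * Y) :
    X ^ ((1 : ℝ) / 2) ≤ ENNReal.ofReal c * Y ^ ((1 : ℝ) / 2) := by
  calc X ^ ((1 : ℝ) / 2) ≤ (ENNReal.ofReal c ^ 2 * Y) ^ ((1 : ℝ) / 2) := by gcongr
    _ = _ := by
      rw [ENNReal.mul_rpow_of_nonneg _ _ (by norm_num),
        show (1 : ℝ) / 2 = ((2 : ℕ) : ℝ)⁻¹ by norm_num,
        ENNReal.pow_rpow_inv_natCast two_ne_zero]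

theorem weight_constants_mul_le_sq {α H t₁ t₂ K : ℝ} (hα : 0 ≤ α) (hα1 : α < 1 / 2)
    (ht₁ : 0 < t₁) (ht₁₂ : t₁ ≤ t₂) (hK : 0 ≤ K) :
    ((1 + t₂) / t₂) ^ (2 * α) * t₂ ^ (2 * α - 2 * H) * K * (4 * t₂ ^ (H - 1 / 2)) ^ 2 *
        (((1 + t₁) / t₁) ^ (-(2 * α)) * (t₁ ^ (1 - 2 * α) / (1 - 2 * α))) ≤
      (4 * Real.sqrt (K / (1 - 2 * α)) * (t₂ / t₁) ^ (α - 1 / 2)) ^ 2 := by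
  have ht₂ : 0 < t₂ := ht₁.trans_le ht₁₂
  have hratio : ((1 + t₂) / t₂) ^ (2 * α) * ((1 + t₁) / t₁) ^ (-(2 * α)) ≤ 1 := by
    rw [Real.rpow_neg (by positivity), ← div_eq_mul_inv, div_le_one (by positivity)]
    refine Real.rpow_le_rpow (by positivity) ?_ (by linarith)
    rw [div_le_div_iff₀ ht₂ ht₁]; nlinarith
  have hpow : t₂ ^ (2 * α - 2 * H) * (t₂ ^ (H - 1 / 2)) ^ 2 * t₁ ^ (1 - 2 * α) =
      ((t₂ / t₁) ^ (α - 1 / 2)) ^ 2 := by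
    rw [← Real.rpow_mul_natCast ht₂.le, ← Real.rpow_mul_natCast (by positivity),
      ← Real.rpow_add ht₂, Real.div_rpow ht₂.le ht₁.le]
    push_cast
    rw [show 2 * α - 2 * H + (H - 1 / 2) * 2 = (α - 1 / 2) * 2 by ring,
      show 1 - 2 * α = -((α - 1 / 2) * 2) by ring, Real.rpow_neg ht₁.le]
    exact (div_eq_mul_inv _ _).symm
  have hsqrt : Real.sqrt (K / (1 - 2 * α)) ^ 2 = K / (1 - 2 * α) :=
    Real.sq_sqrt (div_nonneg hK (by linarith))
  have hpos : 0 ≤ 16 * (K / (1 - 2 * α)) * ((t₂ / t₁) ^ (α - 1 / 2)) ^ 2 :=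
    mul_nonneg (mul_nonneg (by norm_num) (div_nonneg hK (by linarith))) (sq_nonneg _)
  calc _ = 16 * (K / (1 - 2 * α)) * ((t₂ / t₁) ^ (α - 1 / 2)) ^ 2 *
        (((1 + t₂) / t₂) ^ (2 * α) * ((1 + t₁) / t₁) ^ (-(2 * α))) := by
        rw [← hpow]; ring
    _ ≤ 16 * (K / (1 - 2 * α)) * ((t₂ / t₁) ^ (α - 1 / 2)) ^ 2 :=
        mul_le_of_le_one_right hpos hratio
    _ = _ := by rw [mul_pow, mul_pow, hsqrt]; ring

/-- Proposition 4.6: for `0 < α < min{1/2, H}` there is `κ > 0` such that for all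
`t₂ > 2t₁ > 0` and every square-integrable `g₁ : [0,t₁] → ℝⁿ` (extended by zero),
the function `g₂(t) = ∫₀^{t₁} t^{1/2-H} (t₂-s)^{H-1/2} / (t+t₂-s) ‖g₁(s)‖ ds`
satisfies `‖g₂‖_α ≤ κ (t₂/t₁)^{α-1/2} ‖g₁‖_α`. -/
theorem stmt12 (n : ℕ) (H α : ℝ) (hH : H ∈ Set.Ioo (0 : ℝ) 1)
    (hα : 0 < α) (hα' : α < min (1 / 2) H) :
    ∃ κ : ℝ, 0 < κ ∧ ∀ t₁ t₂ : ℝ, 0 < t₁ → 2 * t₁ < t₂ →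
      ∀ g₁ : ℝ → EuclideanSpace ℝ (Fin n),
        MemLp g₁ 2 (volume.restrict (Set.Icc 0 t₁)) →
        (∀ s : ℝ, s ∉ Set.Icc (0 : ℝ) t₁ → g₁ s = 0) →
        (alphaNormSq α fun t : ℝ =>
            ∫ s in (0 : ℝ)..t₁,
              (t ^ ((1 : ℝ) / 2 - H) * (t₂ - s) ^ (H - 1 / 2) / (t + t₂ - s)) * ‖g₁ s‖) ^
            ((1 : ℝ) / 2) ≤
          ENNReal.ofReal (κ * (t₂ / t₁) ^ (α - 1 / 2)) * (alphaNormSq α g₁) ^ ((1 : ℝ) / 2) := by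
  obtain ⟨hH0, hH1⟩ := hH
  obtain ⟨hα1, hαH⟩ := lt_min_iff.1 hα'
  set K := 1 / (2 - 2 * H) + 1 / (2 * H - 2 * α)
  have hK : 0 < K := by
    have : 0 < 2 - 2 * H := by linarith
    have : 0 < 2 * H - 2 * α := by linarith
    positivity
  refine ⟨4 * Real.sqrt (K / (1 - 2 * α)), by
    have : 0 < 1 - 2 * α := by linarith
    positivity, fun t₁ t₂ ht₁ ht₁₂ g₁ hg₁ _ => ?_⟩
  have ht₂ : 0 < t₂ := by linarith
  have hJ := alphaNormSq_rpow_div_add_le hα.le hαH hH1 ht₂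
  have hB := sq_lintegral_Ioc_enorm_le hα.le hα1 ht₁
    (hg₁.aestronglyMeasurable.mono_measure (Measure.restrict_mono Ioc_subset_Icc_self le_rfl))
  have hprofile : Measurable fun t : ℝ => t ^ ((1 : ℝ) / 2 - H) / (t + t₂) := by fun_prop
  have hg₂ := alphaNormSq_le_alphaNormSq_mul_sq α hprofile.aestronglyMeasurable
    fun t (ht : 0 < t) =>
      enorm_intervalIntegral_kernel_le (by linarith) ht ht₁.le ht₁₂ fun s => ‖g₁ s‖
  simp only [enorm_norm] at hg₂
  refine ENNReal.rpow_half_le_of_le_sq_mul (hg₂.trans ?_)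
  have hc : 0 ≤ 4 * t₂ ^ (H - 1 / 2) := by positivity
  calc _ = _ * ENNReal.ofReal (4 * t₂ ^ (H - 1 / 2)) ^ 2 * (∫⁻ s in Ioc 0 t₁, ‖g₁ s‖ₑ) ^ 2 := by
        ring
    _ ≤ _ := mul_le_mul' (mul_le_mul_left hJ _) hB
    _ ≤ _ := by
        rw [← ENNReal.ofReal_pow hc, ← ENNReal.ofReal_mul (by positivity), ← mul_assoc,
          ← ENNReal.ofReal_mul (by positivity), ← ENNReal.ofReal_pow (by positivity)]
        gcongr
        exact weight_constants_mul_le_sq hα.le hα1 ht₁ (by linarith) hK.le
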